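/- arXiv:2310.18774 — 3 statements merged into one kernel-verified Lean document; each statement's English description precedes it below -/
import Mathlib

section
/- Let b : ℝ^d × Θ → ℝ^d be such that b(·,θ) is C¹ with symmetric Jacobian, u^⊤ ∇_x b(x,θ) u ≥ m|u|² for all x outside the ball of radius R and all u, and |∇_x b(x,θ)u| ≤ L|u| for all x, u. Then for any x, y ∈ ℝ^d with |x−y| ≥ 4R(1+L/m) and any u ∈ ℝ^d, one has u^⊤ (∫₀¹ ∇_x b(x+t(y−x),θ) dt) u ≥ (m/2)|u|². -/
/-!
Along the segment `t ↦ x + t (y - x)` the quadratic form `⟪u, ∇b u⟫` is at least `m |u|²`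
except for the parameters `t` with `x + t (y - x) ∈ B_R`, where it is still at least `-L |u|²`.
Those parameters form a set of diameter at most `2R / |y - x|`, so the integral over `[0, 1]`
is at least `m |u|² - (m + L) |u|² · 2R / |y - x|`, and `|y - x| ≥ 4R (1 + L/m)` makes the loss
at most `(m/2) |u|²`.
-/

open scoped RealInnerProductSpace
open MeasureTheory Set

lemma abs_sub_mul_norm_le_of_norm_add_smul_le {E : Type*} [NormedAddCommGroup E]
    [NormedSpace ℝ E] {x v : E} {R a b : ℝ} (ha : ‖x + a • v‖ ≤ R) (hb : ‖x + b • v‖ ≤ R) :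
    |a - b| * ‖v‖ ≤ 2 * R :=
  calc |a - b| * ‖v‖ = ‖(x + a • v) - (x + b • v)‖ := by
        rw [add_sub_add_left_eq_sub, ← sub_smul, norm_smul, Real.norm_eq_abs]
    _ ≤ ‖x + a • v‖ + ‖x + b • v‖ := norm_sub_le _ _
    _ ≤ 2 * R := by linarith

lemma volume_setOf_norm_add_smul_le {E : Type*} [NormedAddCommGroup E] [NormedSpace ℝ E]
    {x v : E} (hv : 0 < ‖v‖) (R : ℝ) :
    volume {t : ℝ | ‖x + t • v‖ ≤ R} ≤ ENNReal.ofReal (2 * R / ‖v‖) := by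
  refine (Real.volume_le_diam _).trans (Metric.ediam_le fun a ha b hb => ?_)
  rw [edist_dist, Real.dist_eq]
  exact ENNReal.ofReal_le_ofReal
    ((le_div_iff₀ hv).2 (abs_sub_mul_norm_le_of_norm_add_smul_le ha hb))

lemma sub_mul_measureReal_le_intervalIntegral {f : ℝ → ℝ} {S : Set ℝ} {a B : ℝ}
    (hf : IntervalIntegrable f volume 0 1) (hS : MeasurableSet S)
    (h_off : ∀ t ∉ S, a ≤ f t) (h_on : ∀ t ∈ S, a - B ≤ f t) :
    a - B * volume.real (S ∩ Ioc (0:ℝ) 1) ≤ ∫ t in (0:ℝ)..1, f t := by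
  have h_ind : IntervalIntegrable (S.indicator (1 : ℝ → ℝ)) volume 0 1 := by
    rw [intervalIntegrable_iff_integrableOn_Ioc_of_le zero_le_one]
    exact (integrableOn_const measure_Ioc_lt_top.ne).indicator hS
  calc a - B * volume.real (S ∩ Ioc 0 1)
      = ∫ t in (0:ℝ)..1, (a - B * S.indicator (1 : ℝ → ℝ) t) := by
        rw [intervalIntegral.integral_sub intervalIntegrable_const (h_ind.const_mul B),
          intervalIntegral.integral_const_mul, intervalIntegral.integral_const,
          intervalIntegral.integral_of_le zero_le_one,
          integral_indicator_one hS, measureReal_restrict_apply hS]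
        simp
    _ ≤ ∫ t in (0:ℝ)..1, f t := by
        refine intervalIntegral.integral_mono_on zero_le_one
          (intervalIntegrable_const.sub (h_ind.const_mul B)) hf fun t _ => ?_
        by_cases ht : t ∈ S
        · simpa [indicator_of_mem ht] using h_on t ht
        · simpa [indicator_of_notMem ht] using h_off t ht

lemma neg_mul_sq_le_inner_of_norm_le {E : Type*} [NormedAddCommGroup E] [InnerProductSpace ℝ E]
    {L : ℝ} {u w : E} (h : ‖w‖ ≤ L * ‖u‖) : -(L * ‖u‖ ^ 2) ≤ ⟪u, w⟫ := by
  refine neg_le_of_abs_le ((abs_real_inner_le_norm u w).trans ?_)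
  calc ‖u‖ * ‖w‖ ≤ ‖u‖ * (L * ‖u‖) := mul_le_mul_of_nonneg_left h (norm_nonneg u)
    _ = L * ‖u‖ ^ 2 := by ring

lemma sub_mul_div_le_inner_intervalIntegral {E : Type*} [NormedAddCommGroup E]
    [InnerProductSpace ℝ E] [CompleteSpace E] {m L R : ℝ} (hm : 0 ≤ m) (hL : 0 ≤ L) (hR : 0 ≤ R)
    {A : E → E →L[ℝ] E} (hA : Continuous A)
    (hlow : ∀ z, R < ‖z‖ → ∀ u, m * ‖u‖ ^ 2 ≤ ⟪u, A z u⟫)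
    (hup : ∀ z u, ‖A z u‖ ≤ L * ‖u‖) (x : E) {v : E} (hv : 0 < ‖v‖) (u : E) :
    m * ‖u‖ ^ 2 - (m + L) * ‖u‖ ^ 2 * (2 * R / ‖v‖) ≤
      ⟪u, ∫ t in (0:ℝ)..1, A (x + t • v) u⟫ := by
  set S := {t : ℝ | ‖x + t • v‖ ≤ R}
  have hS : MeasurableSet S := (isClosed_le (by fun_prop) continuous_const).measurableSet
  have hS_small : volume.real (S ∩ Ioc 0 1) ≤ 2 * R / ‖v‖ := by
    refine ENNReal.toReal_le_of_le_ofReal ?_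
      ((measure_mono inter_subset_left).trans (volume_setOf_norm_add_smul_le hv R))
    positivity
  have hF : Continuous fun t : ℝ => A (x + t • v) u := by fun_prop
  have h_on : ∀ t ∈ S, m * ‖u‖ ^ 2 - (m + L) * ‖u‖ ^ 2 ≤ ⟪u, A (x + t • v) u⟫ := fun t _ =>
    (neg_mul_sq_le_inner_of_norm_le (hup _ u)).trans_eq' (by ring)
  have h_swap :=
    (innerSL ℝ u).intervalIntegral_comp_comm (hF.intervalIntegrable (μ := volume) 0 1)
  simp only [innerSL_apply_apply] at h_swap
  rw [← h_swap]
  calc m * ‖u‖ ^ 2 - (m + L) * ‖u‖ ^ 2 * (2 * R / ‖v‖)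
      ≤ m * ‖u‖ ^ 2 - (m + L) * ‖u‖ ^ 2 * volume.real (S ∩ Ioc 0 1) := by gcongr
    _ ≤ _ := sub_mul_measureReal_le_intervalIntegral
      ((continuous_const.inner hF).intervalIntegrable 0 1) hS
      (fun t ht => hlow _ (not_le.1 ht) u) h_on

theorem stmt0_general {d : ℕ} {Θ : Type*} (m L R : ℝ)
    (hm : 0 < m) (hL : 0 < L) (hR : 0 < R)
    (Db : EuclideanSpace ℝ (Fin d) → Θ → EuclideanSpace ℝ (Fin d) →L[ℝ] EuclideanSpace ℝ (Fin d))
    (hcont : ∀ θ, Continuous fun x => Db x θ)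
    (hlow : ∀ θ (x : EuclideanSpace ℝ (Fin d)), R < ‖x‖ →
      ∀ u, m * ‖u‖ ^ 2 ≤ ⟪u, Db x θ u⟫)
    (hup : ∀ θ (x u : EuclideanSpace ℝ (Fin d)), ‖Db x θ u‖ ≤ L * ‖u‖)
    (θ : Θ) (x y : EuclideanSpace ℝ (Fin d))
    (hxy : 4 * R * (1 + L / m) ≤ ‖x - y‖)
    (u : EuclideanSpace ℝ (Fin d)) :
    m / 2 * ‖u‖ ^ 2 ≤ ⟪u, ∫ t in (0:ℝ)..1, Db (x + t • (y - x)) θ u⟫ := by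
  rw [norm_sub_rev] at hxy
  have hv_pos : 0 < ‖y - x‖ := (by positivity : (0:ℝ) < _).trans_le hxy
  have hv : 4 * R * (m + L) ≤ m * ‖y - x‖ :=
    calc 4 * R * (m + L) = m * (4 * R * (1 + L / m)) := by field_simp
      _ ≤ m * ‖y - x‖ := by gcongr
  have hloss : (m + L) * (2 * R / ‖y - x‖) ≤ m / 2 := by
    rw [mul_div_assoc', div_le_div_iff₀ hv_pos two_pos]
    linarith
  calc m / 2 * ‖u‖ ^ 2 ≤ m * ‖u‖ ^ 2 - (m + L) * ‖u‖ ^ 2 * (2 * R / ‖y - x‖) := by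
        nlinarith [sq_nonneg ‖u‖]
    _ ≤ _ := sub_mul_div_le_inner_intervalIntegral hm.le hL.le hR.le (hcont θ) (hlow θ) (hup θ)
        x hv_pos u

theorem stmt0 {d : ℕ} {Θ : Type*} (m L R : ℝ)
    (hm : 0 < m) (hL : 0 < L) (hR : 0 < R) (hmL : m ≤ L)
    (b : EuclideanSpace ℝ (Fin d) → Θ → EuclideanSpace ℝ (Fin d))
    (Db : EuclideanSpace ℝ (Fin d) → Θ → EuclideanSpace ℝ (Fin d) →L[ℝ] EuclideanSpace ℝ (Fin d))
    (hderiv : ∀ θ x, HasFDerivAt (fun x => b x θ) (Db x θ) x)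
    (hcont : ∀ θ, Continuous fun x => Db x θ)
    (hsymm : ∀ θ x u v, ⟪Db x θ u, v⟫ = ⟪u, Db x θ v⟫)
    (hlow : ∀ θ (x : EuclideanSpace ℝ (Fin d)), R < ‖x‖ →
      ∀ u, m * ‖u‖ ^ 2 ≤ ⟪u, Db x θ u⟫)
    (hup : ∀ θ (x u : EuclideanSpace ℝ (Fin d)), ‖Db x θ u‖ ≤ L * ‖u‖)
    (θ : Θ) (x y : EuclideanSpace ℝ (Fin d))
    (hxy : 4 * R * (1 + L / m) ≤ ‖x - y‖)
    (u : EuclideanSpace ℝ (Fin d)) :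
    m / 2 * ‖u‖ ^ 2 ≤ ⟪u, ∫ t in (0:ℝ)..1, Db (x + t • (y - x)) θ u⟫ :=
  stmt0_general m L R hm hL hR Db hcont hlow hup θ x y hxy u
end

section
/- Define for r ≥ 0 the function g₀(r) = 2 e^{aCr} Φ(−r/2) + (1/√(2π)) ∫_{−r/2}^∞ e^{−2aCu} [e^{−u²/2} − e^{−(u+r)²/2}] du, where a, C > 0 are constants (a plays the role of ĝT̂ and the argument is scaled so r* T̂ = 1). Then the derivative satisfies ∂_r g₀(r) = (2aC / √(2π)) e^{aCr} ∫_{−∞}^{−r/2} e^{−u²/2} (1 − e^{aC(2u + r)}) du for all r ≥ 0. -/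
open MeasureTheory

/-- The standard normal density. -/
noncomputable def stdGaussPDF (x : ℝ) : ℝ :=
  (Real.sqrt (2 * Real.pi))⁻¹ * Real.exp (-x ^ 2 / 2)

/-- The standard normal cumulative distribution function. -/
noncomputable def stdGaussCDF (x : ℝ) : ℝ :=
  ∫ s in Set.Iic x, stdGaussPDF s

/-!
Write `b = aC` and `T = tiltedGaussTail b`, so `T(x) = ∫_x^∞ e^{-2bu - u²/2} du`. The shift
`u ↦ u + r` turns the integral in `g₀` into `T(-r/2) - e^{2br} T(r/2)`, and the reflection
`u ↦ -u` turns the integral in the claimed derivative into `√(2π) Φ(-r/2) - e^{br} T(r/2)`.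
Differentiating `g₀(r) = 2 e^{br} Φ(-r/2) + (T(-r/2) - e^{2br} T(r/2)) / √(2π)` by the
fundamental theorem of calculus, all boundary terms cancel: `e^{-2bu - u²/2}` at `u = -r/2`,
`e^{2br}` times its value at `u = r/2`, and `√(2π) e^{br} φ(-r/2)` all equal `e^{br - r²/8}`.
-/

section

open Real Set

variable {E : Type*} [NormedAddCommGroup E] [NormedSpace ℝ E]

theorem setIntegral_Ioi_comp_add_right (f : ℝ → E) (c d : ℝ) :
    ∫ x in Ioi c, f (x + d) = ∫ x in Ioi (c + d), f x := by
  simpa using (measurePreserving_add_right volume d).setIntegral_preimage_emb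
    (measurableEmbedding_addRight d) f (Ioi (c + d))

theorem hasDerivAt_integral_Iic [CompleteSpace E] {f : ℝ → E} (hf : Integrable f) {x : ℝ}
    (hx : ContinuousAt f x) :
    HasDerivAt (fun y => ∫ t in Iic y, f t) (f x) x := by
  have hftc : HasDerivAt (fun y => ∫ t in (0 : ℝ)..y, f t) (f x) x :=
    intervalIntegral.integral_hasDerivAt_right hf.intervalIntegrable
      hf.aestronglyMeasurable.stronglyMeasurableAtFilter hx
  refine (hftc.const_add (∫ t in Iic 0, f t)).congr_of_eventuallyEq
    (Filter.Eventually.of_forall fun y => ?_)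
  dsimp only
  rw [← intervalIntegral.integral_Iic_sub_Iic hf.integrableOn hf.integrableOn]
  abel

theorem hasDerivAt_integral_Ioi [CompleteSpace E] {f : ℝ → E} (hf : Integrable f) {x : ℝ}
    (hx : ContinuousAt f x) :
    HasDerivAt (fun y => ∫ t in Ioi y, f t) (-f x) x := by
  refine ((hasDerivAt_integral_Iic hf hx).const_sub (∫ t, f t)).congr_of_eventuallyEq
    (Filter.Eventually.of_forall fun y => ?_)
  dsimp only
  rw [← intervalIntegral.integral_Iic_add_Ioi hf.integrableOn hf.integrableOn]
  abel

theorem integrable_exp_neg_mul_sub_sq_div_two (c : ℝ) :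
    Integrable fun u : ℝ => exp (-(c * u) - u ^ 2 / 2) := by
  have h := ((integrable_exp_neg_mul_sq (b := 1 / 2) (by norm_num)).comp_add_right c).const_mul
    (exp (c ^ 2 / 2))
  refine h.congr (ae_of_all _ fun u => ?_)
  dsimp only
  rw [← exp_add]
  ring_nf

theorem integrable_exp_neg_sq_div_two : Integrable fun u : ℝ => exp (-u ^ 2 / 2) := by
  simpa [neg_div] using integrable_exp_neg_mul_sub_sq_div_two 0

theorem integrable_stdGaussPDF : Integrable stdGaussPDF :=
  integrable_exp_neg_sq_div_two.const_mul _

theorem hasDerivAt_stdGaussCDF (x : ℝ) : HasDerivAt stdGaussCDF (stdGaussPDF x) x :=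
  hasDerivAt_integral_Iic integrable_stdGaussPDF (by delta stdGaussPDF; fun_prop)

theorem sqrt_two_pi_mul_stdGaussCDF (x : ℝ) :
    √(2 * π) * stdGaussCDF x = ∫ u in Iic x, exp (-u ^ 2 / 2) := by
  have hpos : 0 < √(2 * π) := by positivity
  simp only [stdGaussCDF, stdGaussPDF]
  rw [integral_const_mul, mul_inv_cancel_left₀ hpos.ne']

noncomputable def tiltedGaussTail (b x : ℝ) : ℝ :=
  ∫ u in Ioi x, exp (-(2 * b * u) - u ^ 2 / 2)

theorem hasDerivAt_tiltedGaussTail (b x : ℝ) :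
    HasDerivAt (tiltedGaussTail b) (-exp (-(2 * b * x) - x ^ 2 / 2)) x :=
  hasDerivAt_integral_Ioi (integrable_exp_neg_mul_sub_sq_div_two (2 * b)) (by fun_prop)

theorem integral_Ioi_eq_tiltedGaussTail_sub (b r x : ℝ) :
    ∫ u in Ioi x, exp (-(2 * b * u)) * (exp (-u ^ 2 / 2) - exp (-(u + r) ^ 2 / 2))
      = tiltedGaussTail b x - exp (2 * b * r) * tiltedGaussTail b (x + r) := by
  have hG := integrable_exp_neg_mul_sub_sq_div_two (2 * b)
  have hpt : ∀ u : ℝ, exp (-(2 * b * u)) * (exp (-u ^ 2 / 2) - exp (-(u + r) ^ 2 / 2))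
      = exp (-(2 * b * u) - u ^ 2 / 2)
        - exp (2 * b * r) * exp (-(2 * b * (u + r)) - (u + r) ^ 2 / 2) := fun u => by
    simp only [mul_sub, ← exp_add]
    ring_nf
  rw [setIntegral_congr_fun measurableSet_Ioi fun u _ => hpt u,
    integral_sub hG.integrableOn ((hG.comp_add_right r).const_mul _).integrableOn,
    integral_const_mul,
    setIntegral_Ioi_comp_add_right (fun u => exp (-(2 * b * u) - u ^ 2 / 2)) x r]
  rfl

theorem integral_Iio_eq_stdGaussCDF_sub_tiltedGaussTail (b r x : ℝ) :
    ∫ u in Iio x, exp (-u ^ 2 / 2) * (1 - exp (b * (2 * u + r)))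
      = √(2 * π) * stdGaussCDF x - exp (b * r) * tiltedGaussTail b (-x) := by
  have hG := (integrable_exp_neg_mul_sub_sq_div_two (2 * b)).comp_neg
  have hpt : ∀ u : ℝ, exp (-u ^ 2 / 2) * (1 - exp (b * (2 * u + r)))
      = exp (-u ^ 2 / 2) - exp (b * r) * exp (-(2 * b * -u) - (-u) ^ 2 / 2) := fun u => by
    simp only [mul_sub, mul_one, ← exp_add]
    ring_nf
  rw [setIntegral_congr_fun measurableSet_Iio fun u _ => hpt u,
    integral_sub integrable_exp_neg_sq_div_two.integrableOn (hG.const_mul _).integrableOn,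
    integral_const_mul, ← integral_Iic_eq_integral_Iio, ← integral_Iic_eq_integral_Iio,
    integral_comp_neg_Iic x fun u => exp (-(2 * b * u) - u ^ 2 / 2), sqrt_two_pi_mul_stdGaussCDF]
  rfl

theorem hasDerivAt_exp_mul_stdGaussCDF_add_tiltedGaussTail (b r : ℝ) :
    HasDerivAt (fun s => 2 * exp (b * s) * stdGaussCDF (-(s / 2))
        + (√(2 * π))⁻¹
          * (tiltedGaussTail b (-(s / 2)) - exp (2 * b * s) * tiltedGaussTail b (s / 2)))
      (2 * b / √(2 * π) * exp (b * r)
        * (√(2 * π) * stdGaussCDF (-(r / 2)) - exp (b * r) * tiltedGaussTail b (r / 2))) r := by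
  have hneg : HasDerivAt (fun s : ℝ => -(s / 2)) (-(1 / 2)) r :=
    ((hasDerivAt_id' r).div_const 2).neg
  have hhalf : HasDerivAt (fun s : ℝ => s / 2) (1 / 2) r := (hasDerivAt_id' r).div_const 2
  have hexp : ∀ c : ℝ, HasDerivAt (fun s => exp (c * s)) (exp (c * r) * (c * 1)) r :=
    fun c => ((hasDerivAt_id' r).const_mul c).exp
  have hderiv := (((hexp b).const_mul 2).mul ((hasDerivAt_stdGaussCDF _).comp r hneg)).add
    ((((hasDerivAt_tiltedGaussTail b _).comp r hneg).sub
      ((hexp (2 * b)).mul ((hasDerivAt_tiltedGaussTail b _).comp r hhalf))).const_mul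
        (√(2 * π))⁻¹)
  refine hderiv.congr_deriv ?_
  have hpos : 0 < √(2 * π) := by positivity
  have hleft : exp (-(2 * b * -(r / 2)) - (-(r / 2)) ^ 2 / 2)
      = exp (b * r) * exp (-(r / 2) ^ 2 / 2) := by
    rw [← exp_add]; ring_nf
  have hright : exp (2 * b * r) * exp (-(2 * b * (r / 2)) - (r / 2) ^ 2 / 2)
      = exp (b * r) * exp (-(r / 2) ^ 2 / 2) := by
    rw [← exp_add, ← exp_add]; ring_nf
  have hsq : exp (2 * b * r) = exp (b * r) * exp (b * r) := by
    rw [← exp_add]; ring_nf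
  have hs : (√(2 * π))⁻¹ * √(2 * π) = 1 := inv_mul_cancel₀ hpos.ne'
  rw [hleft]
  simp only [Function.comp_apply, stdGaussPDF, neg_sq]
  linear_combination (√(2 * π))⁻¹ / 2 * hright
    - 2 * b * exp (b * r) * stdGaussCDF (-(r / 2)) * hs
    - 2 * b * (√(2 * π))⁻¹ * tiltedGaussTail b (r / 2) * hsq

end

theorem stmt6_general (a C : ℝ) (r : ℝ) :
    HasDerivAt
      (fun r : ℝ =>
        2 * Real.exp (a * C * r) * stdGaussCDF (-(r / 2))
          + (Real.sqrt (2 * Real.pi))⁻¹ *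
            ∫ u in Set.Ioi (-(r / 2)),
              Real.exp (-(2 * a * C * u)) *
                (Real.exp (-u ^ 2 / 2) - Real.exp (-(u + r) ^ 2 / 2)))
      ((2 * a * C / Real.sqrt (2 * Real.pi)) * Real.exp (a * C * r) *
        ∫ u in Set.Iio (-(r / 2)),
          Real.exp (-u ^ 2 / 2) * (1 - Real.exp (a * C * (2 * u + r))))
      r := by
  simp only [show 2 * a * C = 2 * (a * C) by ring]
  generalize a * C = b
  have hshift : ∀ s : ℝ,
      ∫ u in Set.Ioi (-(s / 2)), Real.exp (-(2 * b * u)) *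
          (Real.exp (-u ^ 2 / 2) - Real.exp (-(u + s) ^ 2 / 2))
        = tiltedGaussTail b (-(s / 2)) - Real.exp (2 * b * s) * tiltedGaussTail b (s / 2) := by
    intro s
    rw [integral_Ioi_eq_tiltedGaussTail_sub, neg_add_eq_sub, sub_half]
  simp only [hshift, integral_Iio_eq_stdGaussCDF_sub_tiltedGaussTail, neg_neg]
  exact hasDerivAt_exp_mul_stdGaussCDF_add_tiltedGaussTail b r

theorem stmt6 (a C : ℝ) (ha : 0 < a) (hC : 0 < C) (r : ℝ) (hr : 0 ≤ r) :
    HasDerivAt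
      (fun r : ℝ =>
        2 * Real.exp (a * C * r) * stdGaussCDF (-(r / 2))
          + (Real.sqrt (2 * Real.pi))⁻¹ *
            ∫ u in Set.Ioi (-(r / 2)),
              Real.exp (-(2 * a * C * u)) *
                (Real.exp (-u ^ 2 / 2) - Real.exp (-(u + r) ^ 2 / 2)))
      ((2 * a * C / Real.sqrt (2 * Real.pi)) * Real.exp (a * C * r) *
        ∫ u in Set.Iio (-(r / 2)),
          Real.exp (-u ^ 2 / 2) * (1 - Real.exp (a * C * (2 * u + r))))
      r :=
  stmt6_general a C r
end

section
/- For any constant ε̄ > 0, both functions x ↦ ε̄ x / (2(1 − e^{−x}) + ε̄ x) and x ↦ ε̄ x² / (2(1 − e^{−x}) + ε̄ x²) are non-decreasing on [0, ∞). -/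
/-!
Both functions have the form `x ↦ (1 + (2 / ε) * (1 - exp (-x)) / x ^ k)⁻¹` for `x > 0`. Since
`x ↦ 1 - exp (-x)` is concave and vanishes at `0`, its secant slope `(1 - exp (-x)) / x` decreases,
and so does its product with `1 / x`; hence both functions increase on `(0, ∞)`. At `0` both
formulas read `0 / 0 = 0`, which lies below every other value.
-/

open Real Set

lemma one_sub_exp_neg_nonneg {x : ℝ} (hx : 0 ≤ x) : 0 ≤ 1 - exp (-x) :=
  sub_nonneg.2 (exp_le_one_iff.2 (neg_nonpos.2 hx))

lemma antitoneOn_one_sub_exp_neg_div : AntitoneOn (fun x : ℝ => (1 - exp (-x)) / x) (Ioi 0) := by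
  have hconv : ConvexOn ℝ univ (fun x : ℝ => exp (-x)) :=
    convexOn_exp.comp_linearMap (-LinearMap.id)
  intro x hx y hy hxy
  have := hconv.secant_mono (mem_univ 0) (mem_univ x) (mem_univ y) hx.ne' hy.ne' hxy
  simp only [neg_zero, exp_zero, sub_zero] at this
  have hneg : ∀ t : ℝ, (1 - exp (-t)) / t = -((exp (-t) - 1) / t) := fun t => by ring
  simpa only [hneg, neg_le_neg_iff] using this

lemma antitoneOn_one_sub_exp_neg_div_sq :
    AntitoneOn (fun x : ℝ => (1 - exp (-x)) / x ^ 2) (Ioi 0) := by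
  intro x hx y hy hxy
  have := mul_le_mul (antitoneOn_one_sub_exp_neg_div hx hy hxy) (inv_anti₀ hx hxy)
    (inv_nonneg.2 hy.le) (div_nonneg (one_sub_exp_neg_nonneg hx.le) hx.le)
  convert this using 1 <;> field_simp

lemma monotoneOn_mul_div_mul_add_mul {α : Type*} [Preorder α] {s : Set α} {r u : α → ℝ}
    {c d : ℝ} (hc : 0 < c) (hd : 0 < d) (hr : ∀ x ∈ s, 0 ≤ r x) (hu : ∀ x ∈ s, 0 < u x)
    (h : AntitoneOn (fun x => r x / u x) s) :
    MonotoneOn (fun x => d * u x / (c * r x + d * u x)) s := by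
  have key : ∀ x ∈ s, d * u x / (c * r x + d * u x) = (c / d * (r x / u x) + 1)⁻¹ := by
    intro x hx
    have := hu x hx
    field_simp
  intro x hx y hy hxy
  dsimp only
  rw [key x hx, key y hy]
  have := div_nonneg (hr y hy) (hu y hy).le
  exact inv_anti₀ (by positivity)
    (add_le_add_left (mul_le_mul_of_nonneg_left (h hx hy hxy) (div_pos hc hd).le) 1)

lemma monotoneOn_Ici_of_monotoneOn_Ioi {α β : Type*} [LinearOrder α] [Preorder β] {f : α → β}
    {a : α} (hf : MonotoneOn f (Ioi a)) (ha : ∀ x ∈ Ioi a, f a ≤ f x) :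
    MonotoneOn f (Ici a) := by
  intro x hx y hy hxy
  rcases (mem_Ici.1 hx).eq_or_lt with rfl | hx
  · rcases (mem_Ici.1 hy).eq_or_lt with rfl | hy
    · exact le_rfl
    · exact ha y hy
  · exact hf hx (hx.trans_le hxy) hxy

theorem stmt13 (ε : ℝ) (hε : 0 < ε) :
    MonotoneOn (fun x : ℝ => ε * x / (2 * (1 - Real.exp (-x)) + ε * x)) (Set.Ici 0) ∧
      MonotoneOn (fun x : ℝ => ε * x ^ 2 / (2 * (1 - Real.exp (-x)) + ε * x ^ 2))
        (Set.Ici 0) := by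
  have hr : ∀ x ∈ Ioi (0 : ℝ), 0 ≤ 1 - exp (-x) := fun x hx => one_sub_exp_neg_nonneg hx.le
  constructor
  · refine monotoneOn_Ici_of_monotoneOn_Ioi
      (monotoneOn_mul_div_mul_add_mul two_pos hε hr (fun x hx => hx)
        antitoneOn_one_sub_exp_neg_div) fun x (hx : 0 < x) => ?_
    simp only [mul_zero, zero_div]
    have := hr x hx
    positivity
  · refine monotoneOn_Ici_of_monotoneOn_Ioi
      (monotoneOn_mul_div_mul_add_mul two_pos hε hr (fun x hx => pow_pos hx 2)
        antitoneOn_one_sub_exp_neg_div_sq) fun x (hx : 0 < x) => ?_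
    simp only [ne_eq, OfNat.ofNat_ne_zero, not_false_eq_true, zero_pow, mul_zero, zero_div]
    have := hr x hx
    positivity
end
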